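/- arXiv:1712.03004 — 4 statements merged into one kernel-verified Lean document; each statement's English description precedes it below -/
import Mathlib

section
/- Let k be an integer and define the raising operator R_k = (X - \tau)\partial_\tau - k acting on smooth functions f : H \to C, producing functions valued in Poly(X,1) (polynomials of degree at most 1 in X with coefficients smooth functions of \tau). Then for every positive integer d, the d-fold composition R_k^d := R_{k+d-1} \circ \cdots \circ R_k satisfies the closed formula R_k^d f = \sum_{j=0}^{d} \binom{d}{j} \frac{(k+d-1)!}{(k+j-1)!} (-1)^{d-j} (X - \tau)^j \partial_\tau^j f, valid whenever k \geq 1 (so that all factorials are defined). -/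
/-!
Induction on `d`. Since `(X - τ) ∂_τ ((X - τ)^j g) = (X - τ)^(j+1) g' - j (X - τ)^j g`, applying
`R_{k+d}` to `∑_j c_{d,j} (X - τ)^j f^{(j)}` yields the same shape with
`c_{d+1,j} = c_{d,j-1} - (j + k + d) c_{d,j}`, and by Pascal's rule the closed-form coefficients
satisfy this recurrence. Holomorphy of `f` on `H` makes every `f^{(j)}` holomorphic there, which
justifies differentiating term by term.
-/

open Finset

/-- The raising operator `R_k = (X - τ)∂_τ - k`, acting on functions of a
formal variable `X` and a variable `τ` on the upper half plane. -/
noncomputable def Rop (k : ℤ) (F : ℂ → ℂ → ℂ) : ℂ → ℂ → ℂ :=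
  fun X τ => (X - τ) * deriv (fun s => F X s) τ - (k : ℂ) * F X τ

/-- The iterated raising operator `R_k^d = R_{k+d-1} ∘ ⋯ ∘ R_k`. -/
noncomputable def Riter (k : ℤ) : ℕ → (ℂ → ℂ → ℂ) → (ℂ → ℂ → ℂ)
  | 0, F => F
  | d + 1, F => Rop (k + d) (Riter k d F)

noncomputable def raisingCoeff (k : ℤ) (d j : ℕ) : ℂ :=
  (d.choose j : ℂ) * (∏ t ∈ Ico j d, ((k : ℂ) + t)) * (-1) ^ (d - j)

section raisingCoeff

variable (k : ℤ) (d : ℕ)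

lemma raisingCoeff_eq_zero_of_lt {j : ℕ} (h : d < j) : raisingCoeff k d j = 0 := by
  simp [raisingCoeff, Nat.choose_eq_zero_of_lt h]

lemma raisingCoeff_succ_zero :
    raisingCoeff k (d + 1) 0 = -((k : ℂ) + d) * raisingCoeff k d 0 := by
  simp only [raisingCoeff, Nat.choose_zero_right, Nat.sub_zero,
    prod_Ico_succ_top (Nat.zero_le d), pow_succ]
  ring

lemma raisingCoeff_succ_succ (j : ℕ) :
    raisingCoeff k (d + 1) (j + 1)
      = raisingCoeff k d j - ((j + 1 : ℕ) + ((k : ℂ) + d)) * raisingCoeff k d (j + 1) := by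
  rcases lt_trichotomy j d with hjd | rfl | hdj
  · -- Pascal's rule combined with `C(d, j + 1) (j + 1) = C(d, j) (d - j)`
    have hchoose : (d.choose (j + 1) : ℂ) * (j + 1) = d.choose j * ((d : ℂ) - j) := by
      have h := congrArg (Nat.cast : ℕ → ℂ) (Nat.choose_succ_right_eq d j)
      push_cast [Nat.cast_sub hjd.le] at h
      exact h
    have hsign : (-1 : ℂ) ^ (d - j) = -(-1) ^ (d - (j + 1)) := by
      rw [show d - j = d - (j + 1) + 1 by omega, pow_succ]; ring
    simp only [raisingCoeff, Nat.choose_succ_succ, Nat.add_sub_add_right,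
      prod_Ico_succ_top (Nat.succ_le_of_lt hjd), prod_eq_prod_Ico_succ_bot hjd, hsign]
    push_cast
    linear_combination (-1 : ℂ) ^ (d - (j + 1)) * (∏ t ∈ Ico (j + 1) d, ((k : ℂ) + t)) * hchoose
  · simp [raisingCoeff]
  · simp [raisingCoeff_eq_zero_of_lt k d hdj,
      raisingCoeff_eq_zero_of_lt k d (hdj.trans j.lt_succ_self),
      raisingCoeff_eq_zero_of_lt k (d + 1) (Nat.succ_lt_succ hdj)]

lemma sum_raisingCoeff_mul_step (a : ℕ → ℂ) :
    ∑ j ∈ range (d + 1), raisingCoeff k d j * (a (j + 1) - ((j : ℂ) + ((k : ℂ) + d)) * a j)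
      = ∑ j ∈ range (d + 2), raisingCoeff k (d + 1) j * a j := by
  set b : ℕ → ℂ := fun j => ((j : ℂ) + ((k : ℂ) + d)) * raisingCoeff k d j * a j
  have hb_top : b (d + 1) = 0 := by simp [b, raisingCoeff_eq_zero_of_lt k d d.lt_succ_self]
  calc _ = ∑ j ∈ range (d + 1), raisingCoeff k d j * a (j + 1) - ∑ j ∈ range (d + 2), b j := by
        rw [sum_range_succ _ (d + 1), hb_top, add_zero, ← sum_sub_distrib]
        exact sum_congr rfl fun j _ => by ring
    _ = ∑ j ∈ range (d + 1), (raisingCoeff k d j * a (j + 1) - b (j + 1)) - b 0 := by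
        rw [sum_range_succ' b (d + 1), sum_sub_distrib]
        ring
    _ = _ := by
        rw [sum_range_succ' _ (d + 1), raisingCoeff_succ_zero, sub_eq_add_neg]
        congr 1
        · exact sum_congr rfl fun j _ => by rw [raisingCoeff_succ_succ]; push_cast [b]; ring
        · simp only [b, Nat.cast_zero]
          ring

end raisingCoeff

lemma sub_mul_deriv_sub_pow_mul {g : ℂ → ℂ} {τ : ℂ} (hg : DifferentiableAt ℂ g τ) (X : ℂ)
    (j : ℕ) :
    (X - τ) * deriv (fun s => (X - s) ^ j * g s) τ
      = (X - τ) ^ (j + 1) * deriv g τ - j * ((X - τ) ^ j * g τ) := by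
  have h : HasDerivAt (fun s => (X - s) ^ j * g s)
      (j * (X - τ) ^ (j - 1) * -1 * g τ + (X - τ) ^ j * deriv g τ) τ :=
    (((hasDerivAt_id τ).const_sub X).pow j).mul hg.hasDerivAt
  rw [h.deriv]
  rcases j with _ | j
  · simp [pow_succ]
  · rw [Nat.add_sub_cancel]
    push_cast
    ring

theorem Riter_eq_sum_raisingCoeff {U : Set ℂ} (hU : IsOpen U) {f : ℂ → ℂ}
    (hf : ∀ j, DifferentiableOn ℂ (iteratedDeriv j f) U) (k : ℤ) (d : ℕ) (X : ℂ) {τ : ℂ}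
    (hτ : τ ∈ U) :
    Riter k d (fun _ t => f t) X τ
      = ∑ j ∈ range (d + 1), raisingCoeff k d j * ((X - τ) ^ j * iteratedDeriv j f τ) := by
  induction d generalizing τ with
  | zero => simp [Riter, raisingCoeff]
  | succ d ih =>
    have hloc : (fun s => Riter k d (fun _ t => f t) X s) =ᶠ[nhds τ]
        fun s => ∑ j ∈ range (d + 1), raisingCoeff k d j * ((X - s) ^ j * iteratedDeriv j f s) :=
      Filter.eventually_of_mem (hU.mem_nhds hτ) fun s hs => ih hs
    have hdiff (j : ℕ) : DifferentiableAt ℂ (iteratedDeriv j f) τ :=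
      (hf j).differentiableAt (hU.mem_nhds hτ)
    have hderiv : (X - τ) * deriv (fun s => Riter k d (fun _ t => f t) X s) τ
        = ∑ j ∈ range (d + 1), raisingCoeff k d j *
            ((X - τ) ^ (j + 1) * iteratedDeriv (j + 1) f τ
              - j * ((X - τ) ^ j * iteratedDeriv j f τ)) := by
      rw [hloc.deriv_eq, deriv_fun_sum fun j _ => by fun_prop, mul_sum]
      refine sum_congr rfl fun j _ => ?_
      rw [deriv_const_mul _ (by fun_prop), mul_left_comm, sub_mul_deriv_sub_pow_mul (hdiff j),
        iteratedDeriv_succ]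
    rw [Riter, Rop, hderiv, ih hτ, ← sum_raisingCoeff_mul_step k d, mul_sum, ← sum_sub_distrib]
    refine sum_congr rfl fun j _ => ?_
    push_cast
    ring

theorem raising_operator_power_formula_general (k : ℤ) (d : ℕ)
    (f : ℂ → ℂ) (hf : DifferentiableOn ℂ f {z : ℂ | 0 < z.im}) :
    ∀ X τ : ℂ, 0 < τ.im →
      Riter k d (fun _ t => f t) X τ
        = ∑ j ∈ Finset.range (d + 1),
            (d.choose j : ℂ) * (∏ t ∈ Finset.Ico j d, ((k : ℂ) + t))
              * (-1 : ℂ) ^ (d - j) * (X - τ) ^ j * iteratedDeriv j f τ := by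
  have hU : IsOpen {z : ℂ | 0 < z.im} := isOpen_lt continuous_const Complex.continuous_im
  have hderiv (j : ℕ) : DifferentiableOn ℂ (iteratedDeriv j f) {z : ℂ | 0 < z.im} := by
    rw [iteratedDeriv_eq_iterate]
    exact ((hf.analyticOnNhd hU).iterated_deriv j).differentiableOn
  intro X τ hτ
  rw [Riter_eq_sum_raisingCoeff hU hderiv k d X hτ]
  simp only [raisingCoeff, mul_assoc]

/-- Closed formula for the iterated raising operator:
`R_k^d f = ∑_{j=0}^d (d choose j) ((k+d-1)!/(k+j-1)!) (-1)^{d-j} (X-τ)^j ∂_τ^j f`,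
where `(k+d-1)!/(k+j-1)! = ∏_{t=j}^{d-1} (k+t)`, valid for `k ≥ 1`. -/
theorem raising_operator_power_formula (k : ℤ) (hk : 1 ≤ k) (d : ℕ) (hd : 0 < d)
    (f : ℂ → ℂ) (hf : DifferentiableOn ℂ f {z : ℂ | 0 < z.im}) :
    ∀ X τ : ℂ, 0 < τ.im →
      Riter k d (fun _ t => f t) X τ
        = ∑ j ∈ Finset.range (d + 1),
            (d.choose j : ℂ) * (∏ t ∈ Finset.Ico j d, ((k : ℂ) + t))
              * (-1 : ℂ) ^ (d - j) * (X - τ) ^ j * iteratedDeriv j f τ :=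
  raising_operator_power_formula_general k d f hf
end

section
/- Let k \geq 1 and d \geq 0 be integers. The constant coefficient in X of the symmetrized iterated raising operator \pi_{std^d} \circ R_k^d applied to a smooth function f : H \to C equals (-1)^d (\tau\partial_\tau + k + d - 1)(\tau\partial_\tau + k + d - 2)\cdots(\tau\partial_\tau + k) f. Consequently, if k > 0, then \pi_{std^d} \circ R_k^d is injective on polynomial functions of \tau. -/
open Finset

/-- The shifted Euler operator `τ∂_τ + c`. -/
noncomputable def euler (c : ℂ) (f : ℂ → ℂ) : ℂ → ℂ :=
  fun τ => τ * deriv f τ + c * f τ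

/-- `(τ∂_τ + k + d - 1)(τ∂_τ + k + d - 2) ⋯ (τ∂_τ + k)`. -/
noncomputable def eulerIter (k : ℤ) : ℕ → (ℂ → ℂ) → (ℂ → ℂ)
  | 0, f => f
  | d + 1, f => euler ((k : ℂ) + d) (eulerIter k d f)

open Polynomial

/- At `X = 0` each factor `R_{k+i} = (X - τ)∂_τ - (k + i)` becomes `-(τ∂_τ + k + i)`, which gives the
constant coefficient. On polynomials the Euler operator `τ∂_τ + c` is diagonal in the monomial basis,
scaling the coefficient of `τ^n` by `n + c`; for `k > 0` all the scalars `n + k + i` are nonzero, so the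
constant coefficient alone already determines the polynomial. -/

lemma Riter_apply_zero (k : ℤ) (d : ℕ) (f : ℂ → ℂ) (τ : ℂ) :
    Riter k d (fun _ t => f t) 0 τ = (-1 : ℂ) ^ d * eulerIter k d f τ := by
  induction d generalizing τ with
  | zero => simp [Riter, eulerIter]
  | succ d ih =>
    simp only [Riter, Rop, eulerIter, euler, deriv_const_mul_field, ih]
    push_cast
    ring

section EulerPoly

variable {R : Type*} [CommRing R]

noncomputable def eulerPoly (c : R) (p : R[X]) : R[X] :=
  X * derivative p + C c * p

noncomputable def eulerPolyIter (k : ℤ) : ℕ → R[X] → R[X]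
  | 0, p => p
  | d + 1, p => eulerPoly ((k : R) + d) (eulerPolyIter k d p)

lemma coeff_eulerPoly (c : R) (p : R[X]) (n : ℕ) :
    (eulerPoly c p).coeff n = ((n : R) + c) * p.coeff n := by
  cases n with
  | zero => simp [eulerPoly, mul_coeff_zero]
  | succ n =>
    simp [eulerPoly, coeff_X_mul, coeff_derivative]
    ring

lemma eulerPoly_injective [NoZeroDivisors R] {c : R} (hc : ∀ n : ℕ, (n : R) + c ≠ 0) :
    Function.Injective (eulerPoly c) := fun p q h => by
  ext n
  have hn := congrArg (coeff · n) h
  simp only [coeff_eulerPoly] at hn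
  exact mul_left_cancel₀ (hc n) hn

lemma eulerPolyIter_injective [IsDomain R] [CharZero R] {k : ℤ} (hk : 0 < k) (d : ℕ) :
    Function.Injective (eulerPolyIter (R := R) k d) := by
  induction d with
  | zero => exact Function.injective_id
  | succ d ih =>
    refine (eulerPoly_injective fun n => ?_).comp ih
    exact_mod_cast (by omega : (n + (k + d) : ℤ) ≠ 0)

end EulerPoly

lemma euler_eval (c : ℂ) (p : ℂ[X]) :
    euler c (fun t => p.eval t) = fun t => (eulerPoly c p).eval t := by
  funext t
  simp [euler, eulerPoly, Polynomial.deriv]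

lemma eulerIter_eval (k : ℤ) (d : ℕ) (p : ℂ[X]) :
    eulerIter k d (fun t => p.eval t) = fun t => (eulerPolyIter k d p).eval t := by
  induction d with
  | zero => rfl
  | succ d ih => simp only [eulerIter, eulerPolyIter, ih, euler_eval]

/-- The constant coefficient in `X` (i.e. the value at `X = 0`) of
`π_{std^d} ∘ R_k^d f` equals `(-1)^d (τ∂_τ + k+d-1) ⋯ (τ∂_τ + k) f`;
consequently for `k > 0` the operator is injective on polynomial functions
of `τ`. -/
theorem raising_operator_constant_coeff_and_injectivity
    (k : ℤ) (hk : 1 ≤ k) (d : ℕ) :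
    (∀ f : ℂ → ℂ, DifferentiableOn ℂ f {z : ℂ | 0 < z.im} →
      ∀ τ : ℂ, 0 < τ.im →
        Riter k d (fun _ t => f t) 0 τ = (-1 : ℂ) ^ d * eulerIter k d f τ)
    ∧ (∀ p q : Polynomial ℂ,
        (∀ X τ : ℂ, Riter k d (fun _ t => p.eval t) X τ
            = Riter k d (fun _ t => q.eval t) X τ) → p = q) := by
  refine ⟨fun f _ τ _ => Riter_apply_zero k d f τ, fun p q h => ?_⟩
  refine eulerPolyIter_injective (R := ℂ) hk d (Polynomial.funext fun τ => ?_)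
  have h0 := h 0 τ
  rw [Riter_apply_zero, Riter_apply_zero, eulerIter_eval, eulerIter_eval] at h0
  exact mul_left_cancel₀ (pow_ne_zero d (neg_ne_zero.2 one_ne_zero)) h0
end

section
/- Let k be an integer. Define the operator W on functions of the form f_0(\tau) + y^{-1} f_1(\tau) with f_0, f_1 holomorphic on H and y = Im(\tau), by W(f_0 + y^{-1} f_1)(X;\tau) = (X - \tau) f_0(\tau) - 2i f_1(\tau). Then W is covariant with respect to the SL2(R) slash actions from weight k to weight k-1 twisted by the standard representation: for all g in SL2(R), W((f_0 + y^{-1}f_1)|_k g) = (W(f_0 + y^{-1}f_1))|_{k-1, std} g. Here one uses the identity y^{-1} \circ S = y^{-1}\tau(\tau - 2iy) for the inversion S = (0 -1; 1 0). -/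
open Complex

/-- Entry of a real special linear matrix, as a complex number. -/
noncomputable def entR (g : Matrix.SpecialLinearGroup (Fin 2) ℝ) (i j : Fin 2) : ℂ :=
  ((g : Matrix (Fin 2) (Fin 2) ℝ) i j : ℂ)

/-- Möbius transformation with coefficients `a b c d`. -/
noncomputable def moeb (a b c d τ : ℂ) : ℂ := (a * τ + b) / (c * τ + d)

/-- The operator `W(f₀ + y⁻¹f₁)(X;τ) = (X - τ) f₀(τ) - 2i f₁(τ)` on almost
holomorphic functions of depth at most 1 is covariant for `SL₂(ℝ)` from the
weight-`k` slash action to the weight-`(k-1)` slash action twisted by the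
standard representation.  Explicitly: the slashed almost holomorphic function
`(f₀ + y⁻¹f₁)|_k g` has holomorphic parts
`g₀ = (cτ+d)^{-k} f₀(gτ) - 2ic(cτ+d)^{1-k} f₁(gτ)` and
`g₁ = (cτ+d)^{2-k} f₁(gτ)`, and
`W(g₀ + y⁻¹g₁) = (W(f₀ + y⁻¹f₁))|_{k-1, std} g`, where
`(F|_{k-1,std} g)(X;τ) = (cX+d)(cτ+d)^{-(k-1)} F(gX; gτ)` is normalized so
that `(X - τ)` is invariant of weight `-1`. -/
theorem W_operator_covariant (k : ℤ) (f0 f1 : ℂ → ℂ)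
    (hf0 : DifferentiableOn ℂ f0 {z : ℂ | 0 < z.im})
    (hf1 : DifferentiableOn ℂ f1 {z : ℂ | 0 < z.im})
    (g : Matrix.SpecialLinearGroup (Fin 2) ℝ) :
    ∀ a b c d : ℂ, a = entR g 0 0 → b = entR g 0 1 → c = entR g 1 0 → d = entR g 1 1 →
    ((∀ τ : ℂ, 0 < τ.im →
        (c * τ + d) ^ (-k)
            * (f0 (moeb a b c d τ) + ((moeb a b c d τ).im : ℂ)⁻¹ * f1 (moeb a b c d τ))
          = ((c * τ + d) ^ (-k) * f0 (moeb a b c d τ)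
                - 2 * Complex.I * c * (c * τ + d) ^ (1 - k) * f1 (moeb a b c d τ))
            + ((τ.im : ℂ))⁻¹ * ((c * τ + d) ^ (2 - k) * f1 (moeb a b c d τ)))
      ∧ (∀ X τ : ℂ, 0 < τ.im → c * X + d ≠ 0 →
          (X - τ) * ((c * τ + d) ^ (-k) * f0 (moeb a b c d τ)
                - 2 * Complex.I * c * (c * τ + d) ^ (1 - k) * f1 (moeb a b c d τ))
              - 2 * Complex.I * ((c * τ + d) ^ (2 - k) * f1 (moeb a b c d τ))
            = (c * X + d) * (c * τ + d) ^ (-(k - 1))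
                * ((moeb a b c d X - moeb a b c d τ) * f0 (moeb a b c d τ)
                    - 2 * Complex.I * f1 (moeb a b c d τ)))) := by

  intro a b c d ha hb hc hd
  subst ha hb hc hd
  have hdet : entR g 0 0 * entR g 1 1 - entR g 0 1 * entR g 1 0 = 1 := by
    have h := g.property
    rw [Matrix.det_fin_two] at h
    simp only [entR]
    exact_mod_cast h
  have key : ∀ τ : ℂ, 0 < τ.im → entR g 1 0 * τ + entR g 1 1 ≠ 0 := by
    intro τ hτ h
    have h1 : ((g : Matrix (Fin 2) (Fin 2) ℝ) 1 0) * τ.im = 0 := by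
      have := congrArg Complex.im h
      simpa [entR, Complex.add_im, Complex.mul_im] using this
    have hc0 : ((g : Matrix (Fin 2) (Fin 2) ℝ) 1 0) = 0 := by
      rcases mul_eq_zero.mp h1 with h' | h'
      · exact h'
      · exact absurd h' (ne_of_gt hτ)
    have h2 : ((g : Matrix (Fin 2) (Fin 2) ℝ) 1 1) = 0 := by
      have := congrArg Complex.re h
      simpa [entR, Complex.add_re, Complex.mul_re, hc0] using this
    have hd := g.property
    rw [Matrix.det_fin_two] at hd
    rw [hc0, h2] at hd
    simp at hd
  constructor
  · intro τ hτ
    set a := entR g 0 0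
    set b := entR g 0 1
    set c := entR g 1 0
    set d := entR g 1 1
    have hu : c * τ + d ≠ 0 := key τ hτ
    have hy : (τ.im : ℂ) ≠ 0 := by
      exact_mod_cast ne_of_gt hτ
    have hconjτ : (starRingEnd ℂ) τ = τ - 2 * (τ.im : ℂ) * Complex.I := by
      have := Complex.sub_conj τ
      push_cast at this ⊢
      linear_combination -this
    have hca : (starRingEnd ℂ) a = a := by simp [a, entR, Complex.conj_ofReal]
    have hcb : (starRingEnd ℂ) b = b := by simp [b, entR, Complex.conj_ofReal]
    have hcc : (starRingEnd ℂ) c = c := by simp [c, entR, Complex.conj_ofReal]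
    have hcd : (starRingEnd ℂ) d = d := by simp [d, entR, Complex.conj_ofReal]
    have hubar : c * τ + d - 2 * Complex.I * c * (τ.im : ℂ) ≠ 0 := by
      have hcu : (starRingEnd ℂ) (c * τ + d) = c * τ + d - 2 * Complex.I * c * (τ.im : ℂ) := by
        rw [map_add, map_mul, hcc, hcd, hconjτ]; ring
      rw [← hcu]
      intro h
      apply hu
      have := congrArg (starRingEnd ℂ) h
      simpa using this
    have hw : ((moeb a b c d τ).im : ℂ)
        = (τ.im : ℂ) / ((c * τ + d) * (c * τ + d - 2 * Complex.I * c * (τ.im : ℂ))) := by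
      rw [eq_div_iff (mul_ne_zero hu hubar)]
      have h2I : (2 * Complex.I : ℂ) ≠ 0 := by simp [Complex.I_ne_zero]
      apply mul_left_cancel₀ h2I
      have hsub := Complex.sub_conj (moeb a b c d τ)
      have hconjw : (starRingEnd ℂ) (moeb a b c d τ)
          = (a * (starRingEnd ℂ) τ + b) / (c * (starRingEnd ℂ) τ + d) := by
        simp [moeb, map_div₀, map_add, map_mul, hca, hcb, hcc, hcd]
      rw [hconjw, hconjτ] at hsub
      have hden : c * (τ - 2 * (τ.im : ℂ) * Complex.I) + d ≠ 0 := by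
        intro h; apply hubar; rw [← h]; ring
      generalize (moeb a b c d τ).im = W at hsub ⊢
      simp only [moeb] at hsub ⊢
      push_cast at hsub
      have hu' : τ * c + d ≠ 0 := by rwa [mul_comm]
      field_simp [hu'] at hsub
      linear_combination -hsub + 2 * Complex.I * (τ.im : ℂ) * hdet
    rw [hw]
    have hv : (c * τ + d) ^ k ≠ 0 := zpow_ne_zero _ hu
    have e0 : (c * τ + d) ^ (-k) = ((c * τ + d) ^ k)⁻¹ := zpow_neg _ _
    have e1 : (c * τ + d) ^ (1 - k) = (c * τ + d) * ((c * τ + d) ^ k)⁻¹ := by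
      rw [zpow_sub₀ hu, zpow_one, div_eq_mul_inv]
    have e2 : (c * τ + d) ^ (2 - k) = (c * τ + d) * (c * τ + d) * ((c * τ + d) ^ k)⁻¹ := by
      rw [zpow_sub₀ hu, show (2:ℤ) = 1 + 1 from rfl, zpow_add₀ hu, zpow_one, div_eq_mul_inv]
    rw [e0, e1, e2]
    field_simp
    ring
  · intro X τ hτ hX
    set a := entR g 0 0
    set b := entR g 0 1
    set c := entR g 1 0
    set d := entR g 1 1
    have hu : c * τ + d ≠ 0 := key τ hτ
    have hv : (c * τ + d) ^ k ≠ 0 := zpow_ne_zero _ hu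
    have hdiff : moeb a b c d X - moeb a b c d τ
        = (X - τ) / ((c * X + d) * (c * τ + d)) := by
      rw [moeb, moeb]
      rw [div_sub_div _ _ hX hu]; congr 1
      linear_combination (X - τ) * hdet
    have e0 : (c * τ + d) ^ (-k) = ((c * τ + d) ^ k)⁻¹ := zpow_neg _ _
    have e1 : (c * τ + d) ^ (1 - k) = (c * τ + d) * ((c * τ + d) ^ k)⁻¹ := by
      rw [zpow_sub₀ hu, zpow_one, div_eq_mul_inv]
    have e2 : (c * τ + d) ^ (2 - k) = (c * τ + d) * (c * τ + d) * ((c * τ + d) ^ k)⁻¹ := by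
      rw [zpow_sub₀ hu, show (2:ℤ) = 1 + 1 from rfl, zpow_add₀ hu, zpow_one, div_eq_mul_inv]
    rw [hdiff, neg_sub, e0, e1, e2]
    rw [div_eq_mul_inv, mul_inv]
    have h1 : (c * X + d) * (c * X + d)⁻¹ = 1 := mul_inv_cancel₀ hX
    have h2 : (c * τ + d) * (c * τ + d)⁻¹ = 1 := mul_inv_cancel₀ hu
    linear_combination (-(X - τ) * ((c * τ + d) ^ k)⁻¹ * f0 (moeb a b c d τ)) * h1
      + (-(X - τ) * ((c * τ + d) ^ k)⁻¹ * f0 (moeb a b c d τ) * ((c * X + d) * (c * X + d)⁻¹)) * h2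
end

section
/- Let V be a finite-dimensional complex vector space with norm, and \rho : SL2(Z) \to GL(V) the representation sym^j, with operator norm bound \|sym^j(ST^n)\| \le A(1+|n|)^j for all integers n and some constant A \geq 1 (S = (0 -1; 1 0), T = (1 1; 0 1)). If \gamma = (a b; c d) in SL2(Z) has c \neq 0 and d/c has minus continued fraction expansion of length l, so that T^{-m}\gamma = \pm ST^{\alpha_l}\cdots ST^{\alpha_0} for some integer m, then \|sym^j(T^{-m}\gamma)\| \le A^{l+1} \prod_{i=0}^{l}(1+|\alpha_i|)^j, and there is a constant \kappa > 3 depending only on A such that \|sym^j(T^{-m}\gamma)\| \ll_j (|c|+|d|)^{\kappa + j}. -/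
open Polynomial Finset

/-!
`sym^j` is multiplicative on polynomials of degree at most `j`, and `±1` acts by `±1`, so the
bound along a factorization `T^{-m}γ = ± ST^{α_l} ⋯ ST^{α_0}` is the submultiplicativity of the
operator norm.

For the growth bound take `m = ⌊a/c⌋`: the top-left entry of `T^{-m}γ` becomes `a mod c`, and the
determinant relation then bounds the top-right one, so the entries of `T^{-m}γ` have absolute
values summing to at most `2(|c| + |d|)`. Since the truncated coefficient `ℓ¹`-norm is
submultiplicative, `‖sym^j δ‖` is at most the `j`-th power of the sum of the absolute values of
the entries of `δ`, which gives the bound with `κ = 4`.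
-/

/-- The action `sym^m` of `γ = (a b; c e)` on `Poly(X,m)`:
`p(X) ↦ (-cX + a)^m p((eX - b)/(-cX + a))`, in the bounded-degree model. -/
noncomputable def symActC (m : ℕ) (a b c e : ℂ) (p : Polynomial ℂ) : Polynomial ℂ :=
  ∑ i ∈ Finset.range (m + 1),
    Polynomial.C (p.coeff i) * (Polynomial.C e * Polynomial.X - Polynomial.C b) ^ i
      * (-(Polynomial.C c) * Polynomial.X + Polynomial.C a) ^ (m - i)

/-- `sym^m` for an integral matrix. -/
noncomputable def symActZ (m : ℕ) (γ : Matrix.SpecialLinearGroup (Fin 2) ℤ)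
    (p : Polynomial ℂ) : Polynomial ℂ :=
  symActC m ((γ : Matrix (Fin 2) (Fin 2) ℤ) 0 0 : ℂ)
    ((γ : Matrix (Fin 2) (Fin 2) ℤ) 0 1 : ℂ)
    ((γ : Matrix (Fin 2) (Fin 2) ℤ) 1 0 : ℂ)
    ((γ : Matrix (Fin 2) (Fin 2) ℤ) 1 1 : ℂ) p

/-- A fixed norm on `Poly(X,j)`: the sum of the absolute values of the
coefficients. -/
noncomputable def polyNorm (m : ℕ) (p : Polynomial ℂ) : ℝ :=
  ∑ i ∈ Finset.range (m + 1), ‖p.coeff i‖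

section PolyNorm

variable (N : ℕ)

lemma polyNorm_nonneg (p : ℂ[X]) : 0 ≤ polyNorm N p :=
  sum_nonneg fun _ _ => norm_nonneg _

lemma polyNorm_add_le (p q : ℂ[X]) : polyNorm N (p + q) ≤ polyNorm N p + polyNorm N q := by
  rw [polyNorm, polyNorm, polyNorm, ← sum_add_distrib]
  exact sum_le_sum fun i _ => by simpa only [coeff_add] using norm_add_le _ _

lemma polyNorm_sum_le {ι : Type*} (s : Finset ι) (f : ι → ℂ[X]) :
    polyNorm N (∑ i ∈ s, f i) ≤ ∑ i ∈ s, polyNorm N (f i) :=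
  le_sum_of_subadditive (polyNorm N) (by simp [polyNorm]) (polyNorm_add_le N) s f

lemma polyNorm_neg (p : ℂ[X]) : polyNorm N (-p) = polyNorm N p := by
  simp [polyNorm]

lemma polyNorm_C_mul (r : ℂ) (p : ℂ[X]) : polyNorm N (C r * p) = ‖r‖ * polyNorm N p := by
  simp [polyNorm, coeff_C_mul, mul_sum]

lemma polyNorm_C (r : ℂ) : polyNorm N (C r) = ‖r‖ := by
  simp [polyNorm, coeff_C, apply_ite]

lemma polyNorm_X_le : polyNorm N (X : ℂ[X]) ≤ 1 := by
  simp only [polyNorm, coeff_X, apply_ite, norm_one, norm_zero, sum_ite_eq, mem_range]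
  split_ifs <;> norm_num

/-- The coefficients of `p * q` of index at most `N` only involve those of `p` and `q` of index at
most `N`, so truncation does not spoil submultiplicativity. -/
lemma polyNorm_mul_le (p q : ℂ[X]) : polyNorm N (p * q) ≤ polyNorm N p * polyNorm N q := by
  let f : ℕ × ℕ → ℝ := fun x => ‖p.coeff x.1‖ * ‖q.coeff x.2‖
  let s := (range (N + 1) ×ˢ range (N + 1)).filter fun x => x.1 + x.2 ≤ N
  have hfiber : ∀ k ∈ range (N + 1), s.filter (fun x => x.1 + x.2 = k) = antidiagonal k := by
    intro k hk
    ext x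
    simp only [s, mem_filter, mem_product, mem_range,
      HasAntidiagonal.mem_antidiagonal] at hk ⊢
    omega
  have hmaps : ∀ x ∈ s, x.1 + x.2 ∈ range (N + 1) := fun x hx => by
    simp only [s, mem_filter] at hx
    exact mem_range.2 (by omega)
  calc polyNorm N (p * q) ≤ ∑ k ∈ range (N + 1), ∑ x ∈ antidiagonal k, f x :=
        sum_le_sum fun k _ => by
          rw [coeff_mul]
          exact (norm_sum_le _ _).trans_eq (by simp only [f, norm_mul])
    _ = ∑ x ∈ s, f x := by
        rw [← sum_fiberwise_of_maps_to hmaps]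
        exact sum_congr rfl fun k hk => by rw [hfiber k hk]
    _ ≤ ∑ x ∈ range (N + 1) ×ˢ range (N + 1), f x :=
        sum_le_sum_of_subset_of_nonneg (filter_subset _ _) fun _ _ _ => by positivity
    _ = polyNorm N p * polyNorm N q := by rw [sum_product, polyNorm, polyNorm, sum_mul_sum]

lemma polyNorm_pow_le (p : ℂ[X]) (n : ℕ) : polyNorm N (p ^ n) ≤ polyNorm N p ^ n := by
  induction n with
  | zero => simpa using (polyNorm_C N 1).le
  | succ n ih =>
    rw [pow_succ, pow_succ]
    exact (polyNorm_mul_le N _ _).trans (mul_le_mul_of_nonneg_right ih (polyNorm_nonneg N p))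

end PolyNorm

section LinearForms

variable {R : Type*} [Ring R]

lemma natDegree_C_mul_X_sub_C_le (e b : R) : (C e * X - C b).natDegree ≤ 1 := by
  rw [natDegree_sub_C]
  exact (natDegree_C_mul_le e X).trans natDegree_X_le

lemma natDegree_neg_C_mul_X_add_C_le (c a : R) : (-(C c) * X + C a).natDegree ≤ 1 := by
  rw [natDegree_add_C, ← C_neg]
  exact (natDegree_C_mul_le (-c) X).trans natDegree_X_le

lemma natDegree_pow_le_self {f : R[X]} (hf : f.natDegree ≤ 1) (s : ℕ) : (f ^ s).natDegree ≤ s :=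
  (natDegree_pow_le_of_le s hf).trans_eq (mul_one s)

end LinearForms

section SymAct

variable {m n : ℕ} {a b c e : ℂ}

lemma symActC_natDegree_le (p : ℂ[X]) : (symActC m a b c e p).natDegree ≤ m := by
  refine natDegree_sum_le_of_forall_le _ _ fun i hi => natDegree_mul_le.trans ?_
  have hi : i ≤ m := Nat.lt_succ_iff.1 (mem_range.1 hi)
  have hZ := (natDegree_C_mul_le (p.coeff i) _).trans
    (natDegree_pow_le_self (natDegree_C_mul_X_sub_C_le e b) i)
  have hY := natDegree_pow_le_self (natDegree_neg_C_mul_X_add_C_le c a) (m - i)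
  omega

lemma symActC_add (p q : ℂ[X]) :
    symActC m a b c e (p + q) = symActC m a b c e p + symActC m a b c e q := by
  simp [symActC, add_mul, sum_add_distrib]

lemma symActC_C_mul (r : ℂ) (p : ℂ[X]) :
    symActC m a b c e (C r * p) = C r * symActC m a b c e p := by
  simp [symActC, mul_sum, mul_assoc]

lemma symActC_sum {ι : Type*} (s : Finset ι) (f : ι → ℂ[X]) :
    symActC m a b c e (∑ i ∈ s, f i) = ∑ i ∈ s, symActC m a b c e (f i) :=
  map_sum (AddMonoidHom.mk' (symActC m a b c e) symActC_add) f s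

lemma symActC_C_mul_X_pow {s : ℕ} (hs : s ≤ m) (r : ℂ) :
    symActC m a b c e (C r * X ^ s)
      = C r * (C e * X - C b) ^ s * (-(C c) * X + C a) ^ (m - s) := by
  rw [symActC, sum_eq_single s]
  · simp
  · intro i _ hne
    simp [coeff_X_pow, hne]
  · intro h
    exact absurd (mem_range.2 (by omega)) h

lemma symActC_mul {p q : ℂ[X]} (hp : p.natDegree ≤ m) (hq : q.natDegree ≤ n) :
    symActC (m + n) a b c e (p * q) = symActC m a b c e p * symActC n a b c e q := by
  conv_lhs => rw [p.as_sum_range' (m + 1) (by omega), q.as_sum_range' (n + 1) (by omega),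
    sum_mul_sum, symActC_sum]
  conv_rhs => rw [p.as_sum_range' (m + 1) (by omega), q.as_sum_range' (n + 1) (by omega),
    symActC_sum, symActC_sum, sum_mul_sum]
  refine sum_congr rfl fun s hs => ?_
  rw [symActC_sum]
  refine sum_congr rfl fun t ht => ?_
  rw [mem_range] at hs ht
  simp only [← C_mul_X_pow_eq_monomial]
  rw [show C (p.coeff s) * X ^ s * (C (q.coeff t) * X ^ t)
      = C (p.coeff s * q.coeff t) * X ^ (s + t) by rw [C_mul, pow_add]; ring,
    symActC_C_mul_X_pow (by omega), symActC_C_mul_X_pow (by omega),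
    symActC_C_mul_X_pow (by omega), show m + n - (s + t) = (m - s) + (n - t) by omega,
    pow_add, pow_add, C_mul]
  ring

lemma symActC_pow {f : ℂ[X]} (hf : f.natDegree ≤ 1) (n : ℕ) :
    symActC n a b c e (f ^ n) = symActC 1 a b c e f ^ n := by
  induction n with
  | zero => simp [symActC]
  | succ k ih => rw [pow_succ, pow_succ, ← ih, symActC_mul (natDegree_pow_le_self hf k) hf]

lemma symActC_scalar (t : ℂ) {q : ℂ[X]} (hq : q.natDegree ≤ m) :
    symActC m t 0 0 t q = C (t ^ m) * q := by
  conv_rhs => rw [q.as_sum_range' (m + 1) (by omega)]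
  rw [symActC, mul_sum]
  refine sum_congr rfl fun i hi => ?_
  have htm : t ^ m = t ^ i * t ^ (m - i) := by
    rw [← pow_add, Nat.add_sub_cancel' (Nat.lt_succ_iff.1 (mem_range.1 hi))]
  simp only [← C_mul_X_pow_eq_monomial, htm, C_mul, C_pow, map_zero, sub_zero, neg_zero,
    zero_mul, zero_add, mul_pow]
  ring

lemma polyNorm_symActC_le (a b c e : ℂ) (p : ℂ[X]) :
    polyNorm m (symActC m a b c e p) ≤ (‖a‖ + ‖b‖ + ‖c‖ + ‖e‖) ^ m * polyNorm m p := by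
  set w := ‖a‖ + ‖b‖ + ‖c‖ + ‖e‖
  have hZ : polyNorm m (C e * X - C b) ≤ w := by
    rw [sub_eq_add_neg]
    refine (polyNorm_add_le m _ _).trans ?_
    rw [polyNorm_C_mul, polyNorm_neg, polyNorm_C]
    nlinarith [polyNorm_X_le m, norm_nonneg a, norm_nonneg b, norm_nonneg c, norm_nonneg e]
  have hY : polyNorm m (-(C c) * X + C a) ≤ w := by
    refine (polyNorm_add_le m _ _).trans ?_
    rw [← C_neg, polyNorm_C_mul, polyNorm_C, norm_neg]
    nlinarith [polyNorm_X_le m, norm_nonneg a, norm_nonneg b, norm_nonneg c, norm_nonneg e]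
  have hterm : ∀ i ∈ range (m + 1), polyNorm m (C (p.coeff i) * (C e * X - C b) ^ i
      * (-(C c) * X + C a) ^ (m - i)) ≤ ‖p.coeff i‖ * w ^ m := fun i hi => by
    rw [mul_assoc, polyNorm_C_mul]
    refine mul_le_mul_of_nonneg_left ?_ (norm_nonneg _)
    calc _ ≤ polyNorm m ((C e * X - C b) ^ i) * polyNorm m ((-(C c) * X + C a) ^ (m - i)) :=
          polyNorm_mul_le m _ _
      _ ≤ w ^ i * w ^ (m - i) := by
          gcongr
          · exact polyNorm_nonneg m _
          · exact (polyNorm_pow_le m _ i).trans (pow_le_pow_left₀ (polyNorm_nonneg m _) hZ i)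
          · exact (polyNorm_pow_le m _ _).trans (pow_le_pow_left₀ (polyNorm_nonneg m _) hY _)
      _ = w ^ m := by rw [← pow_add, Nat.add_sub_cancel' (Nat.lt_succ_iff.1 (mem_range.1 hi))]
  calc polyNorm m (symActC m a b c e p) ≤ ∑ i ∈ range (m + 1), ‖p.coeff i‖ * w ^ m :=
        (polyNorm_sum_le m _ _).trans (sum_le_sum hterm)
    _ = w ^ m * polyNorm m p := by rw [← sum_mul, polyNorm, mul_comm]

end SymAct

section SymActComp

variable {j : ℕ} {a₁ b₁ c₁ e₁ a₂ b₂ c₂ e₂ : ℂ}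

lemma symActC_one_C_mul_X_sub_C :
    symActC 1 a₂ b₂ c₂ e₂ (C e₁ * X - C b₁)
      = C (c₂ * b₁ + e₂ * e₁) * X - C (a₂ * b₁ + b₂ * e₁) := by
  simp [symActC, sum_range_succ, coeff_X, coeff_C]
  ring

lemma symActC_one_neg_C_mul_X_add_C :
    symActC 1 a₂ b₂ c₂ e₂ (-(C c₁) * X + C a₁)
      = -(C (c₂ * a₁ + e₂ * c₁)) * X + C (a₂ * a₁ + b₂ * c₁) := by
  simp [symActC, sum_range_succ, coeff_X, coeff_C]
  ring

/-- The parameters on the right are the entries of `(a₂ b₂; c₂ e₂) * (a₁ b₁; c₁ e₁)`. -/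
lemma symActC_symActC {p : ℂ[X]} (hp : p.natDegree ≤ j) :
    symActC j a₂ b₂ c₂ e₂ (symActC j a₁ b₁ c₁ e₁ p)
      = symActC j (a₂ * a₁ + b₂ * c₁) (a₂ * b₁ + b₂ * e₁) (c₂ * a₁ + e₂ * c₁)
          (c₂ * b₁ + e₂ * e₁) p := by
  conv_lhs => rw [p.as_sum_range' (j + 1) (by omega)]
  conv_rhs => rw [p.as_sum_range' (j + 1) (by omega)]
  rw [symActC_sum, symActC_sum, symActC_sum]
  refine sum_congr rfl fun s hs => ?_
  have hs : s ≤ j := Nat.lt_succ_iff.1 (mem_range.1 hs)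
  rw [← C_mul_X_pow_eq_monomial, symActC_C_mul_X_pow hs, symActC_C_mul_X_pow hs, mul_assoc,
    mul_assoc, symActC_C_mul]
  congr 1
  obtain ⟨t, rfl⟩ := Nat.exists_eq_add_of_le hs
  rw [Nat.add_sub_cancel_left,
    symActC_mul (natDegree_pow_le_self (natDegree_C_mul_X_sub_C_le _ _) s)
      (natDegree_pow_le_self (natDegree_neg_C_mul_X_add_C_le _ _) t),
    symActC_pow (natDegree_C_mul_X_sub_C_le _ _), symActC_pow (natDegree_neg_C_mul_X_add_C_le _ _),
    symActC_one_C_mul_X_sub_C, symActC_one_neg_C_mul_X_add_C]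

end SymActComp

open scoped MatrixGroups

section SymActZ

variable {j : ℕ}

lemma symActZ_natDegree_le (γ : SL(2, ℤ)) (p : ℂ[X]) : (symActZ j γ p).natDegree ≤ j :=
  symActC_natDegree_le p

lemma symActZ_mul (g₂ g₁ : SL(2, ℤ)) {p : ℂ[X]} (hp : p.natDegree ≤ j) :
    symActZ j (g₂ * g₁) p = symActZ j g₂ (symActZ j g₁ p) := by
  rw [symActZ, symActZ, symActZ, symActC_symActC hp, Matrix.SpecialLinearGroup.coe_mul]
  congr 1 <;> simp [Matrix.mul_apply, Fin.sum_univ_two]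

lemma polyNorm_symActZ_of_coe_eq_one_or_neg_one {ε : SL(2, ℤ)}
    (hε : (ε : Matrix (Fin 2) (Fin 2) ℤ) = 1 ∨ (ε : Matrix (Fin 2) (Fin 2) ℤ) = -1)
    {q : ℂ[X]} (hq : q.natDegree ≤ j) : polyNorm j (symActZ j ε q) = polyNorm j q := by
  obtain ⟨t, ht, hεt⟩ : ∃ t : ℂ, ‖t‖ = 1 ∧ symActZ j ε q = symActC j t 0 0 t q := by
    rcases hε with h | h
    · exact ⟨1, norm_one, by simp [symActZ, h]⟩
    · exact ⟨-1, by simp, by simp [symActZ, h]⟩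
  rw [hεt, symActC_scalar t hq, polyNorm_C_mul, norm_pow, ht, one_pow, one_mul]

lemma polyNorm_symActZ_ofFn_prod_le {n : ℕ} (g : Fin n → SL(2, ℤ)) (B : Fin n → ℝ)
    (hB0 : ∀ i, 0 ≤ B i)
    (hB : ∀ i, ∀ p : ℂ[X], p.natDegree ≤ j → polyNorm j (symActZ j (g i) p) ≤ B i * polyNorm j p)
    {p : ℂ[X]} (hp : p.natDegree ≤ j) :
    polyNorm j (symActZ j (List.ofFn g).prod p) ≤ (∏ i, B i) * polyNorm j p := by
  induction n with
  | zero => simpa using (polyNorm_symActZ_of_coe_eq_one_or_neg_one (Or.inl rfl) hp).le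
  | succ n ih =>
    rw [List.ofFn_succ, List.prod_cons, symActZ_mul _ _ hp, Fin.prod_univ_succ, mul_assoc]
    exact (hB 0 _ (symActZ_natDegree_le _ _)).trans (mul_le_mul_of_nonneg_left
      (ih _ _ (fun i => hB0 _) (fun i => hB _)) (hB0 0))

def absEntrySum (γ : SL(2, ℤ)) : ℤ :=
  |γ 0 0| + |γ 0 1| + |γ 1 0| + |γ 1 1|

lemma absEntrySum_nonneg (γ : SL(2, ℤ)) : 0 ≤ absEntrySum γ := by
  unfold absEntrySum
  positivity

lemma polyNorm_symActZ_le (γ : SL(2, ℤ)) (p : ℂ[X]) :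
    polyNorm j (symActZ j γ p) ≤ (absEntrySum γ : ℝ) ^ j * polyNorm j p := by
  refine (polyNorm_symActC_le _ _ _ _ p).trans_eq ?_
  simp [absEntrySum, Complex.norm_intCast]

open ModularGroup in
lemma exists_absEntrySum_T_zpow_mul_le (γ : SL(2, ℤ)) (hc : γ 1 0 ≠ 0) :
    ∃ m : ℤ, absEntrySum (T ^ (-m) * γ) ≤ 2 * (|γ 1 0| + |γ 1 1|) := by
  set a := γ 0 0
  set b := γ 0 1
  set c := γ 1 0
  set d := γ 1 1
  have hδ : ((T ^ (-(a / c)) * γ : SL(2, ℤ)) : Matrix (Fin 2) (Fin 2) ℤ)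
      = !![a % c, b - a / c * d; c, d] := by
    rw [Matrix.SpecialLinearGroup.coe_mul, coe_T_zpow, Int.emod_def]
    ext i k
    fin_cases i <;> fin_cases k <;> simp [Matrix.mul_apply, Fin.sum_univ_two, a, b, c, d] <;> ring
  have hdet : a * d - b * c = 1 := by
    rw [← Matrix.det_fin_two]
    exact γ.2
  have ha : 0 ≤ a % c ∧ a % c < |c| := ⟨Int.emod_nonneg a hc, Int.emod_lt_abs a hc⟩
  have hb_mul : |b - a / c * d| * |c| ≤ (|c| - 1) * |d| + 1 := by
    have hbc : (b - a / c * d) * c = a % c * d - 1 := by rw [Int.emod_def]; linarith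
    rw [← abs_mul, hbc]
    calc |a % c * d - 1| ≤ |a % c * d| + |1| := abs_sub _ _
      _ ≤ (|c| - 1) * |d| + 1 := by
        rw [abs_mul, abs_of_nonneg ha.1, abs_one]
        gcongr
        omega
  have hb : |b - a / c * d| ≤ |d| + 1 := by
    nlinarith [abs_nonneg d, abs_nonneg (b - a / c * d), Int.one_le_abs hc]
  refine ⟨a / c, ?_⟩
  simp only [absEntrySum, hδ, Matrix.of_apply, Matrix.cons_val', Matrix.cons_val_zero,
    Matrix.cons_val_one, Matrix.empty_val', Matrix.cons_val_fin_one, abs_of_nonneg ha.1]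
  omega

lemma exists_polyNorm_symActZ_T_zpow_mul_le (γ : SL(2, ℤ)) (hc : γ 1 0 ≠ 0) :
    ∃ m : ℤ, ∀ p : ℂ[X], polyNorm j (symActZ j (ModularGroup.T ^ (-m) * γ) p)
      ≤ 2 ^ j * (|(γ 1 0 : ℝ)| + |(γ 1 1 : ℝ)|) ^ j * polyNorm j p := by
  obtain ⟨m, hm⟩ := exists_absEntrySum_T_zpow_mul_le γ hc
  refine ⟨m, fun p => (polyNorm_symActZ_le _ p).trans ?_⟩
  rw [← mul_pow]
  have hnonneg : (0 : ℝ) ≤ absEntrySum (ModularGroup.T ^ (-m) * γ) := by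
    exact_mod_cast absEntrySum_nonneg _
  have hsum : (absEntrySum (ModularGroup.T ^ (-m) * γ) : ℝ)
      ≤ 2 * (|(γ 1 0 : ℝ)| + |(γ 1 1 : ℝ)|) := by
    exact_mod_cast hm
  gcongr
  exact polyNorm_nonneg j p

end SymActZ

/-- Norm bound for `sym^j` along minus continued fraction factorizations:
if `‖sym^j(STⁿ)‖ ≤ A(1+|n|)^j` and `T^{-m}γ = ± ST^{α_l} ⋯ ST^{α_0}`, then
`‖sym^j(T^{-m}γ)‖ ≤ A^{l+1} ∏ᵢ (1+|αᵢ|)^j`; moreover there is a constant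
`κ > 3` (depending only on `A`) with `‖sym^j(T^{-m}γ)‖ ≪_j (|c|+|d|)^{κ+j}`. -/
theorem sym_power_norm_bound_via_continued_fractions (j : ℕ) (A : ℝ) (hA : 1 ≤ A)
    (hbound : ∀ n : ℤ, ∀ p : Polynomial ℂ, p.natDegree ≤ j →
      polyNorm j (symActZ j (ModularGroup.S * ModularGroup.T ^ n) p)
        ≤ A * (1 + |(n : ℝ)|) ^ j * polyNorm j p) :
    (∀ (m : ℤ) (l : ℕ) (α : Fin (l + 1) → ℤ)
        (γ ε : Matrix.SpecialLinearGroup (Fin 2) ℤ),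
      ((ε : Matrix (Fin 2) (Fin 2) ℤ) = 1 ∨ (ε : Matrix (Fin 2) (Fin 2) ℤ) = -1) →
      ModularGroup.T ^ (-m) * γ
          = ε * (List.ofFn (fun i : Fin (l + 1) =>
              ModularGroup.S * ModularGroup.T ^ (α i))).prod →
      ∀ p : Polynomial ℂ, p.natDegree ≤ j →
        polyNorm j (symActZ j (ModularGroup.T ^ (-m) * γ) p)
          ≤ A ^ (l + 1) * (∏ i, (1 + |(α i : ℝ)|) ^ j) * polyNorm j p)
    ∧ (∃ κ : ℝ, 3 < κ ∧ ∃ C : ℝ, ∀ γ : Matrix.SpecialLinearGroup (Fin 2) ℤ,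
        (γ : Matrix (Fin 2) (Fin 2) ℤ) 1 0 ≠ 0 →
        ∃ m : ℤ, ∀ p : Polynomial ℂ, p.natDegree ≤ j →
          polyNorm j (symActZ j (ModularGroup.T ^ (-m) * γ) p)
            ≤ C * ((|((γ : Matrix (Fin 2) (Fin 2) ℤ) 1 0 : ℝ)|
                  + |((γ : Matrix (Fin 2) (Fin 2) ℤ) 1 1 : ℝ)|) ^ (κ + (j : ℝ)))
                * polyNorm j p) := by
  refine ⟨fun m l α γ ε hε hγ p hp => ?_, 4, by norm_num, 2 ^ j, fun γ hc => ?_⟩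
  · have hprod := polyNorm_symActZ_ofFn_prod_le _ (fun i => A * (1 + |(α i : ℝ)|) ^ j)
      (fun i => by positivity) (fun i => hbound (α i)) hp
    rw [prod_mul_distrib, prod_const, card_univ, Fintype.card_fin] at hprod
    rwa [hγ, symActZ_mul _ _ hp,
      polyNorm_symActZ_of_coe_eq_one_or_neg_one hε (symActZ_natDegree_le _ _)]
  · obtain ⟨m, hm⟩ := exists_polyNorm_symActZ_T_zpow_mul_le (j := j) γ hc
    refine ⟨m, fun p _ => (hm p).trans ?_⟩
    have hx : (1 : ℝ) ≤ |(γ 1 0 : ℝ)| + |(γ 1 1 : ℝ)| := by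
      have : (1 : ℝ) ≤ |(γ 1 0 : ℝ)| := by exact_mod_cast Int.one_le_abs hc
      linarith [abs_nonneg (γ 1 1 : ℝ)]
    refine mul_le_mul_of_nonneg_right (mul_le_mul_of_nonneg_left ?_ (by positivity))
      (polyNorm_nonneg j p)
    rw [← Real.rpow_natCast]
    exact Real.rpow_le_rpow_of_exponent_le hx (by linarith)
end
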